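/- Let K and H be Hopf algebras with bijective antipodes over k, τ : K ⊗ H → k a linear form satisfying (A.1)–(A.4), W a Yetter–Drinfel'd module over K, V a Yetter–Drinfel'd module over H, and β : W ⊗ V → k a linear form. Then the following are equivalent: (a) β(k·w, v) = β(w, v↼τ_ℓ(k)) for all k ∈ K, w ∈ W, v ∈ V, and β(w↼τ_r(h), v) = β(w, S⁻¹(h)·v) for all w ∈ W, h ∈ H, v ∈ V; (b) β_ℓ(W) ⊆ (V^op̲)^r and β_ℓ : W → (V^op̲)^r is τ_ℓ-linear and τ_ℓ-colinear. -/

import Mathlib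

/-!
Conditions (a) and (b) share `τ_ℓ`-linearity, and `τ_ℓ`-colinearity of `β_ℓ` is (C.2) read
through the coaction of `W`: both sides of (C.2) equal `τ(w₍₋₁₎, h) β(w₍₀₎, v)`.  What remains is
that (C.2) forces `β_ℓ(w)` into `(V^op̲)^r`.  Writing `w₍₋₁₎ ⊗ w₍₀₎ = ∑ xᵢ ⊗ wᵢ`, the functional
`h ↦ β(w, S⁻¹(h)·v)` is a combination of the `τ(xᵢ, -)`, so it vanishes on the largest two-sided
ideal `I` killed by all of them.  Applying (A.1) twice, `τ(x, b a c)` is a combination of values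
`τ(y, a)` with `y` among finitely many Sweedler components of the `xᵢ`; hence `I` contains the
common kernel of finitely many functionals and is cofinite.
-/

open TensorProduct Coalgebra

universe u

variable {k H M : Type u} [Field k] [Ring H] [HopfAlgebra k H]
  [AddCommGroup M] [Module k M]

/-- The left hand side `h ⊗ m ↦ h₁ m₍₋₁₎ ⊗ h₂ · m₍₀₎` of the Yetter–Drinfel'd
compatibility condition, as a linear map `H ⊗ M → H ⊗ M`. -/
noncomputable def ydLHS (act : H ⊗[k] M →ₗ[k] M) (coact : M →ₗ[k] H ⊗[k] M) :
    H ⊗[k] M →ₗ[k] H ⊗[k] M :=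
  TensorProduct.map (LinearMap.mul' k H) act
    ∘ₗ (TensorProduct.tensorTensorTensorComm k H H H M).toLinearMap
    ∘ₗ TensorProduct.map (Coalgebra.comul : H →ₗ[k] H ⊗[k] H) coact

/-- The right hand side `h ⊗ m ↦ (h₁ · m)₍₋₁₎ h₂ ⊗ (h₁ · m)₍₀₎` of the Yetter–Drinfel'd
compatibility condition, as a linear map `H ⊗ M → H ⊗ M`. -/
noncomputable def ydRHS (act : H ⊗[k] M →ₗ[k] M) (coact : M →ₗ[k] H ⊗[k] M) :
    H ⊗[k] M →ₗ[k] H ⊗[k] M :=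
  TensorProduct.map (LinearMap.mul' k H ∘ₗ (TensorProduct.comm k H H).toLinearMap) LinearMap.id
    ∘ₗ (TensorProduct.assoc k H H M).symm.toLinearMap
    ∘ₗ TensorProduct.map LinearMap.id (coact ∘ₗ act)
    ∘ₗ (TensorProduct.assoc k H H M).toLinearMap
    ∘ₗ TensorProduct.map (TensorProduct.comm k H H).toLinearMap LinearMap.id
    ∘ₗ TensorProduct.map (Coalgebra.comul : H →ₗ[k] H ⊗[k] H) LinearMap.id

/-- `v ↼ p = p(v₍₋₁₎) v₍₀₎`, the right action of a functional `p ∈ H*` induced by a left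
`H`-comodule structure. -/
noncomputable def rAct {k H V : Type u} [Field k] [Ring H] [HopfAlgebra k H]
    [AddCommGroup V] [Module k V] (coact : V →ₗ[k] H ⊗[k] V) (p : H →ₗ[k] k) :
    V →ₗ[k] V :=
  (TensorProduct.lid k V).toLinearMap ∘ₗ TensorProduct.map p LinearMap.id ∘ₗ coact

universe v

namespace Coalgebra.Repr

variable {R A : Type*} [CommSemiring R] [AddCommMonoid A] [Module R A] [CoalgebraStruct R A]
  {a : A} {ι : Type*}

-- `ℛ` is indexed in the universe of `A`; hypotheses quantifying over `ι : Type v` need this copy.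
noncomputable def uliftFin (r : Repr R a ι) : Repr R a (ULift.{v} (Fin r.index.card)) where
  index := Finset.univ
  left i := r.left (r.index.equivFin.symm i.down)
  right i := r.right (r.index.equivFin.symm i.down)
  eq := by
    rw [← r.eq, ← Finset.sum_coe_sort r.index]
    exact Fintype.sum_equiv (Equiv.ulift.trans r.index.equivFin.symm) _ _ fun _ => rfl

end Coalgebra.Repr

section PairingAnnihilator

variable {R C A : Type*} [CommRing R] [AddCommGroup C] [Module R C] [Ring A] [Algebra R A]
  (τ : C ⊗[R] A →ₗ[R] R)

def pairingAnnihilator (X : Finset C) : Submodule R A :=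
  ⨅ x ∈ X, ⨅ b : A, ⨅ c : A,
    LinearMap.ker (τ ∘ₗ TensorProduct.mk R C A x ∘ₗ LinearMap.mulLeft R b ∘ₗ LinearMap.mulRight R c)

variable {τ} {X : Finset C}

theorem mem_pairingAnnihilator {a : A} :
    a ∈ pairingAnnihilator τ X ↔ ∀ x ∈ X, ∀ b c : A, τ (x ⊗ₜ (b * (a * c))) = 0 := by
  simp [pairingAnnihilator]

theorem mul_mem_pairingAnnihilator {a : A} (ha : a ∈ pairingAnnihilator τ X) (h : A) :
    h * a ∈ pairingAnnihilator τ X ∧ a * h ∈ pairingAnnihilator τ X := by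
  simp only [mem_pairingAnnihilator] at ha ⊢
  refine ⟨fun x hx b c => ?_, fun x hx b c => ?_⟩
  · simpa only [mul_assoc] using ha x hx (b * h) c
  · simpa only [mul_assoc] using ha x hx b (h * c)

theorem pairing_eq_zero_of_mem_pairingAnnihilator {a : A} (ha : a ∈ pairingAnnihilator τ X)
    {x : C} (hx : x ∈ X) : τ (x ⊗ₜ a) = 0 := by
  simpa using mem_pairingAnnihilator.1 ha x hx 1 1

variable [CoalgebraStruct R C]
  (hmul : ∀ (x : C) (a a' : A) {ι : Type v} (r : Coalgebra.Repr R x ι),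
    τ (x ⊗ₜ (a * a')) = ∑ i ∈ r.index, τ (r.right i ⊗ₜ a) * τ (r.left i ⊗ₜ a'))
include hmul

theorem exists_finset_pairing_mul_mul_eq_zero (x : C) :
    ∃ Y : Finset C, ∀ a : A, (∀ y ∈ Y, τ (y ⊗ₜ a) = 0) → ∀ b c : A, τ (x ⊗ₜ (b * a * c)) = 0 := by
  classical
  let r := (ℛ R x).uliftFin.{v}
  let r' i := (ℛ R (r.right i)).uliftFin.{v}
  refine ⟨r.index.biUnion fun i => (r' i).index.image (r' i).left, fun a ha b c => ?_⟩
  rw [hmul x _ c r]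
  refine Finset.sum_eq_zero fun i hi => ?_
  rw [hmul _ b a (r' i), Finset.sum_eq_zero, zero_mul]
  exact fun j hj => by
    rw [ha _ (Finset.mem_biUnion.2 ⟨i, hi, Finset.mem_image_of_mem _ hj⟩), mul_zero]

theorem finite_quotient_pairingAnnihilator [IsNoetherianRing R] :
    Module.Finite R (A ⧸ pairingAnnihilator τ X) := by
  classical
  choose Y hY using exists_finset_pairing_mul_mul_eq_zero hmul
  let Φ : A →ₗ[R] (X.biUnion Y → R) := LinearMap.pi fun y => τ ∘ₗ TensorProduct.mk R C A y
  have hker : LinearMap.ker Φ ≤ pairingAnnihilator τ X := fun a ha =>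
    mem_pairingAnnihilator.2 fun x hx b c => by
      rw [← mul_assoc]
      exact hY x a (fun y hy => congrFun ha ⟨y, Finset.mem_biUnion.2 ⟨x, hx, hy⟩⟩) b c
  have : Module.Finite R (A ⧸ LinearMap.ker Φ) :=
    Module.Finite.equiv Φ.quotKerEquivRange.symm
  exact Module.Finite.of_surjective _ (Submodule.factor_surjective hker)

end PairingAnnihilator

theorem rAct_eq_sum {coact : M →ₗ[k] H ⊗[k] M} {m : M} {S : Finset (H × M)}
    (hS : coact m = ∑ q ∈ S, q.1 ⊗ₜ q.2) (p : H →ₗ[k] k) :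
    rAct coact p m = ∑ q ∈ S, p q.1 • q.2 := by
  simp [rAct, hS]

theorem exists_ideal_rAct_pairing_eq_zero {k K H W : Type u} [Field k] [Ring K] [Ring H]
    [HopfAlgebra k K] [Algebra k H] [AddCommGroup W] [Module k W]
    (τ : K ⊗[k] H →ₗ[k] k)
    (hmul : ∀ (x : K) (a a' : H) {ι : Type v} (r : Coalgebra.Repr k x ι),
      τ (x ⊗ₜ (a * a')) = ∑ i ∈ r.index, τ (r.right i ⊗ₜ a) * τ (r.left i ⊗ₜ a'))
    (coact : W →ₗ[k] K ⊗[k] W) (w : W) :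
    ∃ I : Submodule k H, (∀ a ∈ I, ∀ h : H, h * a ∈ I ∧ a * h ∈ I) ∧
      FiniteDimensional k (H ⧸ I) ∧
      ∀ a ∈ I, rAct coact (τ ∘ₗ (TensorProduct.mk k K H).flip a) w = 0 := by
  classical
  obtain ⟨S, hS⟩ := TensorProduct.exists_finset (coact w)
  refine ⟨pairingAnnihilator τ (S.image Prod.fst), fun a ha => mul_mem_pairingAnnihilator ha,
    finite_quotient_pairingAnnihilator hmul, fun a ha => ?_⟩
  rw [rAct_eq_sum hS]
  refine Finset.sum_eq_zero fun q hq => ?_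
  simp [pairing_eq_zero_of_mem_pairingAnnihilator ha (Finset.mem_image_of_mem _ hq)]

theorem mul'_map_pairing_coaction_apply {k K H W V : Type u} [Field k] [Ring K] [HopfAlgebra k K]
    [AddCommGroup H] [Module k H] [AddCommGroup W] [Module k W] [AddCommGroup V] [Module k V]
    (τ : K ⊗[k] H →ₗ[k] k) (β : W ⊗[k] V →ₗ[k] k) (coact : W →ₗ[k] K ⊗[k] W)
    (w : W) (h : H) (v : V) :
    (LinearMap.mul' k k ∘ₗ TensorProduct.map τ β
        ∘ₗ (TensorProduct.tensorTensorTensorComm k K W H V).toLinearMap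
        ∘ₗ TensorProduct.map coact LinearMap.id) (w ⊗ₜ (h ⊗ₜ v))
      = β (rAct coact (τ ∘ₗ (TensorProduct.mk k K H).flip h) w ⊗ₜ v) := by
  simp only [rAct, LinearMap.comp_apply, TensorProduct.map_tmul, LinearEquiv.coe_coe,
    LinearMap.id_coe, id_eq]
  induction coact w using TensorProduct.induction_on with
  | zero => simp
  | tmul x w' => simp [← TensorProduct.smul_tmul']
  | add t₁ t₂ ih₁ ih₂ => simp only [TensorProduct.add_tmul, map_add, ih₁, ih₂]

theorem stmt_18_general {k K H W V : Type u} [Field k] [Ring K] [Ring H]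
    [HopfAlgebra k K] [HopfAlgebra k H]
    [AddCommGroup W] [Module k W] [AddCommGroup V] [Module k V]
    (SinvH : H →ₗ[k] H)
    (τ : K ⊗[k] H →ₗ[k] k)
    -- (A.1)–(A.4) for `τ`:
    (hA1 : ∀ (x : K) (a a' : H) {ι : Type*} (r : Coalgebra.Repr k x ι),
      τ (x ⊗ₜ (a * a')) = ∑ i ∈ r.index, τ (r.right i ⊗ₜ a) * τ (r.left i ⊗ₜ a'))
    -- `W` is a Yetter–Drinfel'd module over `K`:
    (actW : K ⊗[k] W →ₗ[k] W) (coactW : W →ₗ[k] K ⊗[k] W)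
    -- `V` is a Yetter–Drinfel'd module over `H`:
    (actV : H ⊗[k] V →ₗ[k] V) (coactV : V →ₗ[k] H ⊗[k] V)
    (β : W ⊗[k] V →ₗ[k] k) :
    -- (a) ⟺ (b):
    (((∀ (x : K) (w : W) (v : V),
        β (actW (x ⊗ₜ w) ⊗ₜ v) = β (w ⊗ₜ rAct coactV (τ ∘ₗ TensorProduct.mk k K H x) v)) ∧
      (∀ (h : H) (w : W) (v : V),
        β (rAct coactW (τ ∘ₗ (TensorProduct.mk k K H).flip h) w ⊗ₜ v)
          = β (w ⊗ₜ actV (SinvH h ⊗ₜ v))))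
    ↔
    -- (b): `β_ℓ(W) ⊆ (V^op̲)^r` …
    ((∀ w : W, ∃ I : Submodule k H,
        (∀ x ∈ I, ∀ h : H, h * x ∈ I ∧ x * h ∈ I) ∧
        FiniteDimensional k (H ⧸ I) ∧
        (∀ x ∈ I, ∀ v : V, β (w ⊗ₜ actV (SinvH x ⊗ₜ v)) = 0)) ∧
    -- … `β_ℓ` is `τ_ℓ`-linear …
     (∀ (x : K) (w : W) (v : V),
        β (actW (x ⊗ₜ w) ⊗ₜ v) = β (w ⊗ₜ rAct coactV (τ ∘ₗ TensorProduct.mk k K H x) v)) ∧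
    -- … and `τ_ℓ`-colinear:
     (∀ (w : W) (h : H) (v : V),
        β (w ⊗ₜ actV (SinvH h ⊗ₜ v))
          = (LinearMap.mul' k k ∘ₗ TensorProduct.map τ β
              ∘ₗ (TensorProduct.tensorTensorTensorComm k K W H V).toLinearMap
              ∘ₗ TensorProduct.map coactW LinearMap.id) (w ⊗ₜ (h ⊗ₜ v))))) := by
  simp only [mul'_map_pairing_coaction_apply]
  constructor
  · rintro ⟨hlin, hC2⟩
    refine ⟨fun w => ?_, hlin, fun w h v => (hC2 h w v).symm⟩
    obtain ⟨I, hI, hfin, hvan⟩ := exists_ideal_rAct_pairing_eq_zero τ hA1 coactW w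
    exact ⟨I, hI, hfin, fun a ha v => by rw [← hC2, hvan a ha, TensorProduct.zero_tmul, map_zero]⟩
  · rintro ⟨-, hlin, hcolin⟩
    exact ⟨hlin, fun h w v => (hcolin w h v).symm⟩

theorem stmt_18 {k K H W V : Type u} [Field k] [Ring K] [Ring H]
    [HopfAlgebra k K] [HopfAlgebra k H]
    [AddCommGroup W] [Module k W] [AddCommGroup V] [Module k V]
    (SinvK : K →ₗ[k] K)
    (hSK₁ : HopfAlgebra.antipode (R := k) ∘ₗ SinvK = LinearMap.id)
    (hSK₂ : SinvK ∘ₗ HopfAlgebra.antipode (R := k) = LinearMap.id)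
    (SinvH : H →ₗ[k] H)
    (hSH₁ : HopfAlgebra.antipode (R := k) ∘ₗ SinvH = LinearMap.id)
    (hSH₂ : SinvH ∘ₗ HopfAlgebra.antipode (R := k) = LinearMap.id)
    (τ : K ⊗[k] H →ₗ[k] k)
    -- (A.1)–(A.4) for `τ`:
    (hA1 : ∀ (x : K) (a a' : H) {ι : Type*} (r : Coalgebra.Repr k x ι),
      τ (x ⊗ₜ (a * a')) = ∑ i ∈ r.index, τ (r.right i ⊗ₜ a) * τ (r.left i ⊗ₜ a'))
    (hA2 : ∀ a : H, τ ((1 : K) ⊗ₜ a) = Coalgebra.counit a)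
    (hA3 : ∀ (x x' : K) (a : H) {ι : Type*} (r : Coalgebra.Repr k a ι),
      τ ((x * x') ⊗ₜ a) = ∑ i ∈ r.index, τ (x ⊗ₜ r.left i) * τ (x' ⊗ₜ r.right i))
    (hA4 : ∀ x : K, τ (x ⊗ₜ (1 : H)) = Coalgebra.counit x)
    -- `W` is a Yetter–Drinfel'd module over `K`:
    (actW : K ⊗[k] W →ₗ[k] W) (coactW : W →ₗ[k] K ⊗[k] W)
    (hactW1 : ∀ w : W, actW ((1 : K) ⊗ₜ w) = w)
    (hactW2 : ∀ (x y : K) (w : W), actW ((x * y) ⊗ₜ w) = actW (x ⊗ₜ actW (y ⊗ₜ w)))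
    (hcoW1 : TensorProduct.map (Coalgebra.comul : K →ₗ[k] K ⊗[k] K) LinearMap.id ∘ₗ coactW
      = (TensorProduct.assoc k K K W).symm.toLinearMap
          ∘ₗ TensorProduct.map LinearMap.id coactW ∘ₗ coactW)
    (hcoW2 : (TensorProduct.lid k W).toLinearMap
        ∘ₗ TensorProduct.map (Coalgebra.counit : K →ₗ[k] k) LinearMap.id ∘ₗ coactW
      = LinearMap.id)
    (hydW : ydLHS actW coactW = ydRHS actW coactW)
    -- `V` is a Yetter–Drinfel'd module over `H`:
    (actV : H ⊗[k] V →ₗ[k] V) (coactV : V →ₗ[k] H ⊗[k] V)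
    (hactV1 : ∀ v : V, actV ((1 : H) ⊗ₜ v) = v)
    (hactV2 : ∀ (g h : H) (v : V), actV ((g * h) ⊗ₜ v) = actV (g ⊗ₜ actV (h ⊗ₜ v)))
    (hcoV1 : TensorProduct.map (Coalgebra.comul : H →ₗ[k] H ⊗[k] H) LinearMap.id ∘ₗ coactV
      = (TensorProduct.assoc k H H V).symm.toLinearMap
          ∘ₗ TensorProduct.map LinearMap.id coactV ∘ₗ coactV)
    (hcoV2 : (TensorProduct.lid k V).toLinearMap
        ∘ₗ TensorProduct.map (Coalgebra.counit : H →ₗ[k] k) LinearMap.id ∘ₗ coactV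
      = LinearMap.id)
    (hydV : ydLHS actV coactV = ydRHS actV coactV)
    (β : W ⊗[k] V →ₗ[k] k) :
    -- (a) ⟺ (b):
    (((∀ (x : K) (w : W) (v : V),
        β (actW (x ⊗ₜ w) ⊗ₜ v) = β (w ⊗ₜ rAct coactV (τ ∘ₗ TensorProduct.mk k K H x) v)) ∧
      (∀ (h : H) (w : W) (v : V),
        β (rAct coactW (τ ∘ₗ (TensorProduct.mk k K H).flip h) w ⊗ₜ v)
          = β (w ⊗ₜ actV (SinvH h ⊗ₜ v))))
    ↔
    -- (b): `β_ℓ(W) ⊆ (V^op̲)^r` …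
    ((∀ w : W, ∃ I : Submodule k H,
        (∀ x ∈ I, ∀ h : H, h * x ∈ I ∧ x * h ∈ I) ∧
        FiniteDimensional k (H ⧸ I) ∧
        (∀ x ∈ I, ∀ v : V, β (w ⊗ₜ actV (SinvH x ⊗ₜ v)) = 0)) ∧
    -- … `β_ℓ` is `τ_ℓ`-linear …
     (∀ (x : K) (w : W) (v : V),
        β (actW (x ⊗ₜ w) ⊗ₜ v) = β (w ⊗ₜ rAct coactV (τ ∘ₗ TensorProduct.mk k K H x) v)) ∧
    -- … and `τ_ℓ`-colinear:
     (∀ (w : W) (h : H) (v : V),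
        β (w ⊗ₜ actV (SinvH h ⊗ₜ v))
          = (LinearMap.mul' k k ∘ₗ TensorProduct.map τ β
              ∘ₗ (TensorProduct.tensorTensorTensorComm k K W H V).toLinearMap
              ∘ₗ TensorProduct.map coactW LinearMap.id) (w ⊗ₜ (h ⊗ₜ v))))) :=
  stmt_18_general SinvH τ hA1 actW coactW actV coactV β
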